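/- arXiv:2411.05513 — 7 statements merged into one kernel-verified Lean document; each statement's English description precedes it below -/
import Mathlib

section
/- Let G be a finite connected simple graph with at least three vertices, and let δ ∈ (0,1] be a real number satisfying H(G,δ) = 1 (equivalently, δ is the unique positive root of the modified Hosoya polynomial H*(G,x) = 1 − H(G,x)). Then δ > 1/(MH(G) + 1). -/
open scoped Classical in
/-- The Hosoya polynomial `H(G,x)` of a finite simple graph `G`, as a function of `x`:
the sum over unordered pairs of distinct vertices of `x ^ d(a,b)` (no constant term). -/
noncomputable def hosoyaPoly {V : Type*} [Fintype V] (G : SimpleGraph V) (x : ℝ) : ℝ :=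
  ∑ p ∈ Finset.univ.filter (fun p : Sym2 V => ¬ p.IsDiag),
    Sym2.lift ⟨fun a b => x ^ G.dist a b,
      fun a b => by dsimp only; rw [SimpleGraph.dist_comm]⟩ p

open scoped Classical in
/-- `d_k(G)`: the number of unordered pairs of distinct vertices of `G` at distance exactly `k`. -/
noncomputable def distPairs {V : Type*} [Fintype V] (G : SimpleGraph V) (k : ℕ) : ℕ :=
  (Finset.univ.filter (fun p : Sym2 V => ¬ p.IsDiag ∧
    Sym2.lift ⟨fun a b => G.dist a b, fun _ _ => SimpleGraph.dist_comm⟩ p = k)).card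

/-- `MH(G) = max { d_k(G) : k ≥ 1 }`. -/
noncomputable def maxDistPairs {V : Type*} [Fintype V] (G : SimpleGraph V) : ℕ :=
  sSup {m : ℕ | ∃ k, 1 ≤ k ∧ distPairs G k = m}

/-!
Since `G` is connected, every pair of distinct vertices lies at a distance `k` with
`1 ≤ k < |V|`, so grouping the pairs by distance gives
`H(G,δ) = ∑ d_k δ^k ≤ MH(G) · ∑_{1 ≤ k < |V|} δ^k`. Multiplying `1 = H(G,δ)` by `1 - δ ≥ 0`
and summing the geometric series yields `1 - δ ≤ MH(G) (δ - δ^|V|) < MH(G) δ`,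
i.e. `1 < (MH(G) + 1) δ`.
-/

open Finset

namespace SimpleGraph

variable {V : Type*} (G : SimpleGraph V)

noncomputable def sym2Dist : Sym2 V → ℕ :=
  Sym2.lift ⟨fun a b => G.dist a b, fun _ _ => dist_comm⟩

lemma dist_lt_card [Fintype V] (a b : V) : G.dist a b < Fintype.card V := by
  by_cases hr : G.Reachable a b
  · obtain ⟨p, hp, hlen⟩ := hr.exists_path_of_dist
    exact hlen ▸ hp.length_lt
  · rw [dist_eq_zero_of_not_reachable hr]
    exact Fintype.card_pos_iff.mpr ⟨a⟩

lemma sym2Dist_lt_card [Fintype V] (p : Sym2 V) : G.sym2Dist p < Fintype.card V := by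
  induction p with
  | h a b => exact G.dist_lt_card a b

variable {G}

lemma Connected.sym2Dist_pos (hG : G.Connected) {p : Sym2 V} (hp : ¬p.IsDiag) :
    0 < G.sym2Dist p := by
  induction p with
  | h a b => exact hG.pos_dist_of_ne (Sym2.mk_isDiag_iff.not.mp hp)

end SimpleGraph

open SimpleGraph

section

variable {V : Type*} [Fintype V] (G : SimpleGraph V)

lemma hosoyaPoly_eq_sum_range (x : ℝ) :
    hosoyaPoly G x = ∑ k ∈ range (Fintype.card V), (distPairs G k : ℝ) * x ^ k := by
  classical
  have hpow : ∀ p : Sym2 V, Sym2.lift ⟨fun a b => x ^ G.dist a b,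
      fun a b => by dsimp only; rw [SimpleGraph.dist_comm]⟩ p = x ^ G.sym2Dist p := by
    intro p
    induction p with
    | h a b => rfl
  simp only [hosoyaPoly, hpow]
  rw [← sum_fiberwise_of_maps_to (g := G.sym2Dist) (t := range (Fintype.card V))
    fun p _ => mem_range.mpr (G.sym2Dist_lt_card p)]
  refine sum_congr rfl fun k _ => ?_
  rw [sum_congr rfl fun p hp => by rw [(mem_filter.mp hp).2], sum_const, nsmul_eq_mul,
    filter_filter]
  rfl

lemma distPairs_zero_of_connected (hG : G.Connected) : distPairs G 0 = 0 := by
  classical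
  refine card_eq_zero.mpr (filter_eq_empty_iff.mpr fun p _ ⟨hp, h0⟩ => ?_)
  exact (hG.sym2Dist_pos hp).ne' h0

lemma distPairs_le_maxDistPairs {k : ℕ} (hk : 1 ≤ k) : distPairs G k ≤ maxDistPairs G := by
  classical
  refine le_csSup ⟨Fintype.card (Sym2 V), ?_⟩ ⟨k, hk, rfl⟩
  rintro m ⟨k, -, rfl⟩
  exact (card_filter_le _ _).trans_eq card_univ

lemma hosoyaPoly_le_maxDistPairs_mul_geom_sum (hG : G.Connected) {x : ℝ} (hx : 0 ≤ x) :
    hosoyaPoly G x ≤ maxDistPairs G * ∑ k ∈ Ico 1 (Fintype.card V), x ^ k := by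
  have hcard : 0 < Fintype.card V := Fintype.card_pos_iff.mpr hG.nonempty
  rw [hosoyaPoly_eq_sum_range, range_eq_Ico, sum_eq_sum_Ico_succ_bot hcard,
    distPairs_zero_of_connected G hG, Nat.cast_zero, zero_mul, zero_add, mul_sum]
  gcongr with k hk
  exact_mod_cast distPairs_le_maxDistPairs G (mem_Ico.mp hk).1

end

lemma one_div_add_one_lt_of_one_le_mul_geom_sum {M x : ℝ} {n : ℕ} (hM : 0 ≤ M) (hx₀ : 0 < x)
    (hx₁ : x ≤ 1) (h : 1 ≤ M * ∑ k ∈ Ico 1 n, x ^ k) : 1 / (M + 1) < x := by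
  have hn : 1 ≤ n := Nat.one_le_iff_ne_zero.mpr (by rintro rfl; norm_num at h)
  have hMpos : 0 < M := hM.lt_of_ne (by rintro rfl; norm_num at h)
  have key : 1 - x < M * x :=
    calc 1 - x ≤ M * (∑ k ∈ Ico 1 n, x ^ k) * (1 - x) := le_mul_of_one_le_left (by linarith) h
      _ = M * x - M * x ^ n := by rw [mul_assoc, geom_sum_Ico_mul_neg x hn, pow_one, mul_sub]
      _ < M * x := sub_lt_self _ (mul_pos hMpos (pow_pos hx₀ n))
  rw [div_lt_iff₀ (by linarith)]
  linarith

theorem wiener_root_index_lower_bound_general {V : Type*} [Fintype V] (G : SimpleGraph V)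
    (hconn : G.Connected)
    (δ : ℝ) (hδ : δ ∈ Set.Ioc (0 : ℝ) 1)
    (hroot : hosoyaPoly G δ = 1) :
    1 / ((maxDistPairs G : ℝ) + 1) < δ :=
  one_div_add_one_lt_of_one_le_mul_geom_sum (Nat.cast_nonneg _) hδ.1 hδ.2
    (hroot ▸ hosoyaPoly_le_maxDistPairs_mul_geom_sum G hconn hδ.1.le)

/-- **Theorem.** Let `G` be a finite connected simple graph with at least three vertices and let `δ ∈ (0,1]` satisfy `H(G,δ) = 1` (i.e., `δ` is the unique positive root of `H*(G,x) = 1 - H(G,x)`). Then `δ > 1 / (MH(G) + 1)`. -/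
theorem wiener_root_index_lower_bound {V : Type*} [Fintype V] (G : SimpleGraph V)
    (hconn : G.Connected) (hcard : 3 ≤ Fintype.card V)
    (δ : ℝ) (hδ : δ ∈ Set.Ioc (0 : ℝ) 1)
    (hroot : hosoyaPoly G δ = 1) :
    1 / ((maxDistPairs G : ℝ) + 1) < δ :=
  wiener_root_index_lower_bound_general G hconn δ hδ hroot
end

section
/- Let G be a finite connected simple graph with at least three vertices, and let δ ∈ (0,1] be a real number satisfying Sc(G,δ) = 1 (equivalently, δ is the unique positive root of the modified Schultz polynomial Sc*(G,x) = 1 − Sc(G,x)). Then δ > 1/(MS(G) + 1). -/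
open scoped Classical in
/-- The Schultz polynomial `Sc(G,x)`: the sum over unordered pairs of distinct vertices of
`(deg a + deg b) * x ^ d(a,b)`. -/
noncomputable def schultzPoly {V : Type*} [Fintype V] (G : SimpleGraph V) (x : ℝ) : ℝ :=
  ∑ p ∈ Finset.univ.filter (fun p : Sym2 V => ¬ p.IsDiag),
    Sym2.lift ⟨fun a b => ((G.degree a : ℝ) + (G.degree b : ℝ)) * x ^ G.dist a b,
      fun a b => by dsimp only; rw [SimpleGraph.dist_comm]; ring⟩ p

open scoped Classical in
/-- `s_k(G)`: the sum of `deg a + deg b` over all unordered pairs of distinct vertices at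
distance exactly `k` (equal to `0` if there is no such pair). -/
noncomputable def schultzCoeff {V : Type*} [Fintype V] (G : SimpleGraph V) (k : ℕ) : ℕ :=
  ∑ p ∈ Finset.univ.filter (fun p : Sym2 V => ¬ p.IsDiag ∧
      Sym2.lift ⟨fun a b => G.dist a b, fun _ _ => SimpleGraph.dist_comm⟩ p = k),
    Sym2.lift ⟨fun a b => G.degree a + G.degree b, fun a b => by dsimp only; ring⟩ p

/-- `MS(G) = max { s_k(G) : k ≥ 1 }`. -/
noncomputable def maxSchultzCoeff {V : Type*} [Fintype V] (G : SimpleGraph V) : ℕ :=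
  sSup {m : ℕ | ∃ k, 1 ≤ k ∧ schultzCoeff G k = m}

/-!
Since `G` is connected, distinct vertices are at distance between `1` and `|V| - 1`, so
`Sc(G,x) = ∑_{k=1}^{n} s_k x^k` with `n = |V| - 1`, and each `s_k ≤ MS(G) =: M`.
If `δ ≤ 1/(M+1)`, i.e. `Mδ ≤ 1 - δ`, then by induction on `n`,
`M (δ + ⋯ + δ^n) ≤ 1 - δ^n < 1`, contradicting `Sc(G,δ) = 1`.
-/

open Finset

lemma SimpleGraph.dist_lt_card_s2 {V : Type*} [Fintype V] [Nonempty V] (G : SimpleGraph V)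
    (a b : V) : G.dist a b < Fintype.card V := by
  classical
  by_cases hr : G.Reachable a b
  · obtain ⟨w⟩ := hr
    calc G.dist a b ≤ w.bypass.length := G.dist_le _
      _ < Fintype.card V := w.bypass_isPath.length_lt
  · rw [SimpleGraph.dist_eq_zero_of_not_reachable hr]
    exact Fintype.card_pos

open scoped Classical in
lemma schultzPoly_eq_sum_schultzCoeff {V : Type*} [Fintype V] [Nonempty V]
    (G : SimpleGraph V) (x : ℝ) :
    schultzPoly G x = ∑ k ∈ range (Fintype.card V), (schultzCoeff G k : ℝ) * x ^ k := by
  let dist₂ : Sym2 V → ℕ := Sym2.lift ⟨fun a b => G.dist a b, fun _ _ => G.dist_comm⟩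
  have hmaps : ∀ p ∈ univ.filter (fun p : Sym2 V => ¬ p.IsDiag),
      dist₂ p ∈ range (Fintype.card V) := by
    rintro ⟨a, b⟩ -
    exact mem_range.2 (G.dist_lt_card_s2 a b)
  rw [schultzPoly, ← sum_fiberwise_of_maps_to hmaps]
  refine sum_congr rfl fun k _ => ?_
  rw [schultzCoeff, filter_filter, Nat.cast_sum, sum_mul]
  refine sum_congr rfl ?_
  rintro ⟨a, b⟩ hp
  have hk : G.dist a b = k := (mem_filter.1 hp).2.2
  simp only [Sym2.lift_mk, hk]
  push_cast
  ring

lemma schultzCoeff_zero {V : Type*} [Fintype V] {G : SimpleGraph V} (hconn : G.Connected) :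
    schultzCoeff G 0 = 0 := by
  refine sum_eq_zero ?_
  rintro ⟨a, b⟩ hp
  simp only [mem_filter, mem_univ, true_and, Sym2.lift_mk, Sym2.mk_isDiag_iff] at hp
  exact absurd (hconn.dist_eq_zero_iff.1 hp.2) hp.1

lemma schultzCoeff_le_maxSchultzCoeff {V : Type*} [Fintype V] (G : SimpleGraph V) {k : ℕ}
    (hk : 1 ≤ k) : schultzCoeff G k ≤ maxSchultzCoeff G := by
  classical
  refine le_csSup ⟨∑ p ∈ univ.filter (fun p : Sym2 V => ¬ p.IsDiag),
    Sym2.lift ⟨fun a b => G.degree a + G.degree b, fun a b => add_comm _ _⟩ p, ?_⟩ ⟨k, hk, rfl⟩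
  rintro _ ⟨j, -, rfl⟩
  refine sum_le_sum_of_subset fun p hp => ?_
  simp only [mem_filter, mem_univ, true_and] at hp ⊢
  exact hp.1

lemma mul_sum_pow_succ_le {M δ : ℝ} (hδ : 0 ≤ δ) (hMδ : M * δ ≤ 1 - δ) (n : ℕ) :
    M * ∑ k ∈ range n, δ ^ (k + 1) ≤ 1 - δ ^ n := by
  induction n with
  | zero => simp
  | succ n ih =>
    calc M * ∑ k ∈ range (n + 1), δ ^ (k + 1)
        = M * δ + δ * (M * ∑ k ∈ range n, δ ^ (k + 1)) := by
          rw [sum_range_succ', mul_left_comm δ, mul_sum _ _ δ]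
          simp only [← pow_succ']
          ring
      _ ≤ (1 - δ) + δ * (1 - δ ^ n) := add_le_add hMδ (mul_le_mul_of_nonneg_left ih hδ)
      _ = 1 - δ ^ (n + 1) := by ring

theorem schultz_root_index_lower_bound_general {V : Type*} [Fintype V] (G : SimpleGraph V)
    (hconn : G.Connected)
    (δ : ℝ) (hδ : δ ∈ Set.Ioc (0 : ℝ) 1)
    (hroot : schultzPoly G δ = 1) :
    1 / ((maxSchultzCoeff G : ℝ) + 1) < δ := by
  obtain ⟨hδ0, -⟩ := hδ
  set M := maxSchultzCoeff G
  by_contra! hsmall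
  have hMδ : (M : ℝ) * δ ≤ 1 - δ := by
    rw [le_div_iff₀ (by positivity)] at hsmall
    linarith
  have := hconn.nonempty
  obtain ⟨n, hn⟩ := Nat.exists_eq_add_one_of_ne_zero (Fintype.card_pos (α := V)).ne'
  have hbound : schultzPoly G δ ≤ 1 - δ ^ n := calc
    schultzPoly G δ = ∑ k ∈ range n, (schultzCoeff G (k + 1) : ℝ) * δ ^ (k + 1) := by
      rw [schultzPoly_eq_sum_schultzCoeff, hn, sum_range_succ', schultzCoeff_zero hconn]
      simp
    _ ≤ ∑ k ∈ range n, (M : ℝ) * δ ^ (k + 1) := sum_le_sum fun k _ =>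
      mul_le_mul_of_nonneg_right
        (by exact_mod_cast schultzCoeff_le_maxSchultzCoeff G k.succ_pos) (by positivity)
    _ ≤ 1 - δ ^ n := by rw [← mul_sum]; exact mul_sum_pow_succ_le hδ0.le hMδ n
  linarith [pow_pos hδ0 n]

/-- **Theorem.** Let `G` be a finite connected simple graph with at least three vertices and let `δ ∈ (0,1]` satisfy `Sc(G,δ) = 1` (i.e., `δ` is the unique positive root of `Sc*(G,x) = 1 - Sc(G,x)`). Then `δ > 1 / (MS(G) + 1)`. -/
theorem schultz_root_index_lower_bound {V : Type*} [Fintype V] (G : SimpleGraph V)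
    (hconn : G.Connected) (hcard : 3 ≤ Fintype.card V)
    (δ : ℝ) (hδ : δ ∈ Set.Ioc (0 : ℝ) 1)
    (hroot : schultzPoly G δ = 1) :
    1 / ((maxSchultzCoeff G : ℝ) + 1) < δ :=
  schultz_root_index_lower_bound_general G hconn δ hδ hroot
end

section
/- Let G be a finite connected simple graph with at least three vertices, and let δ ∈ (0,1] be a real number satisfying Gut(G,δ) = 1 (equivalently, δ is the unique positive root of the modified Gutman polynomial Gut*(G,x) = 1 − Gut(G,x)). Then δ > 1/(MG(G) + 1). -/
open scoped Classical in
/-- The Gutman polynomial `Gut(G,x)`: the sum over unordered pairs of distinct vertices of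
`deg a * deg b * x ^ d(a,b)`. -/
noncomputable def gutmanPoly {V : Type*} [Fintype V] (G : SimpleGraph V) (x : ℝ) : ℝ :=
  ∑ p ∈ Finset.univ.filter (fun p : Sym2 V => ¬ p.IsDiag),
    Sym2.lift ⟨fun a b => ((G.degree a : ℝ) * (G.degree b : ℝ)) * x ^ G.dist a b,
      fun a b => by dsimp only; rw [SimpleGraph.dist_comm]; ring⟩ p

open scoped Classical in
/-- `g_k(G)`: the sum of `deg a * deg b` over all unordered pairs of distinct vertices at
distance exactly `k` (equal to `0` if there is no such pair). -/
noncomputable def gutmanCoeff {V : Type*} [Fintype V] (G : SimpleGraph V) (k : ℕ) : ℕ :=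
  ∑ p ∈ Finset.univ.filter (fun p : Sym2 V => ¬ p.IsDiag ∧
      Sym2.lift ⟨fun a b => G.dist a b, fun _ _ => SimpleGraph.dist_comm⟩ p = k),
    Sym2.lift ⟨fun a b => G.degree a * G.degree b, fun a b => by dsimp only; ring⟩ p

/-- `MG(G) = max { g_k(G) : k ≥ 1 }`. -/
noncomputable def maxGutmanCoeff {V : Type*} [Fintype V] (G : SimpleGraph V) : ℕ :=
  sSup {m : ℕ | ∃ k, 1 ≤ k ∧ gutmanCoeff G k = m}

/-- **Theorem.** Let `G` be a finite connected simple graph with at least three vertices and let `δ ∈ (0,1]` satisfy `Gut(G,δ) = 1` (i.e., `δ` is the unique positive root of `Gut*(G,x) = 1 - Gut(G,x)`). Then `δ > 1 / (MG(G) + 1)`. -/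
theorem gutman_root_index_lower_bound {V : Type*} [Fintype V] (G : SimpleGraph V)
    (hconn : G.Connected) (hcard : 3 ≤ Fintype.card V)
    (δ : ℝ) (hδ : δ ∈ Set.Ioc (0 : ℝ) 1)
    (hroot : gutmanPoly G δ = 1) :
    1 / ((maxGutmanCoeff G : ℝ) + 1) < δ := by
  classical
  obtain ⟨hδ0, hδ1⟩ := hδ
  have hnt : Nontrivial V := Fintype.one_lt_card_iff_nontrivial.mp (by omega)
  set n := Fintype.card V with hn
  set d : Sym2 V → ℕ :=
    Sym2.lift ⟨fun a b => G.dist a b, fun _ _ => SimpleGraph.dist_comm⟩ with hd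
  set w : Sym2 V → ℕ :=
    Sym2.lift ⟨fun a b => G.degree a * G.degree b, fun a b => by dsimp only; ring⟩ with hw
  set S : Finset (Sym2 V) := Finset.univ.filter (fun p : Sym2 V => ¬ p.IsDiag) with hS
  -- degrees are positive
  have hdeg : ∀ a : V, 0 < G.degree a := by
    intro a
    obtain ⟨b, hb⟩ := exists_ne a
    have hdpos : 0 < G.dist a b := hconn.pos_dist_of_ne (Ne.symm hb)
    obtain ⟨p, hp⟩ := hconn.exists_walk_length_eq_dist a b
    cases p with
    | nil => simp [← hp] at hdpos
    | cons h q => exact G.degree_pos_iff_exists_adj a |>.mpr ⟨_, h⟩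
  -- distance bounds on S
  have hdist1 : ∀ p ∈ S, 1 ≤ d p := by
    intro p hp
    induction p with
    | _ a b =>
      simp only [hS, Finset.mem_filter, Sym2.isDiag_iff_proj_eq] at hp
      exact hconn.pos_dist_of_ne hp.2
  have hdistn : ∀ p ∈ S, d p < n := by
    intro p hp
    induction p with
    | _ a b =>
      obtain ⟨q, hq⟩ := hconn.exists_walk_length_eq_dist a b
      have : q.IsPath := q.isPath_of_length_eq_dist hq
      have := this.length_lt
      simpa [hd, ← hq] using this
  -- coefficients as fibered sums
  have hcoeff : ∀ k, gutmanCoeff G k = ∑ p ∈ S.filter (fun p => d p = k), w p := by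
    intro k
    rw [gutmanCoeff, hS, Finset.filter_filter]
  -- rewrite the polynomial
  have hpoly : gutmanPoly G δ = ∑ p ∈ S, (w p : ℝ) * δ ^ d p := by
    rw [gutmanPoly]
    refine Finset.sum_congr rfl fun p hp => ?_
    induction p with
    | _ a b => simp [hd, hw]
  have hfib : ∑ p ∈ S, (w p : ℝ) * δ ^ d p
      = ∑ k ∈ S.image d, ∑ p ∈ S.filter (fun p => d p = k), (w p : ℝ) * δ ^ d p :=
    (Finset.sum_fiberwise_of_maps_to (fun x hx => Finset.mem_image_of_mem d hx) _).symm
  have hinner : ∀ k, ∑ p ∈ S.filter (fun p => d p = k), (w p : ℝ) * δ ^ d p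
      = (gutmanCoeff G k : ℝ) * δ ^ k := by
    intro k
    rw [hcoeff k]
    push_cast
    rw [Finset.sum_mul]
    refine Finset.sum_congr rfl fun p hp => ?_
    rw [(Finset.mem_filter.mp hp).2]
  have hkey : gutmanPoly G δ = ∑ k ∈ S.image d, (gutmanCoeff G k : ℝ) * δ ^ k := by
    rw [hpoly, hfib]
    exact Finset.sum_congr rfl fun k _ => hinner k
  -- bounded above
  have hbdd : BddAbove {m : ℕ | ∃ k, 1 ≤ k ∧ gutmanCoeff G k = m} := by
    refine ⟨∑ p ∈ S, w p, fun m hm => ?_⟩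
    obtain ⟨k, _, rfl⟩ := hm
    rw [hcoeff k]
    exact Finset.sum_le_sum_of_subset (Finset.filter_subset _ _)
  set M := maxGutmanCoeff G with hM
  have hMge : ∀ k, 1 ≤ k → gutmanCoeff G k ≤ M :=
    fun k hk => le_csSup hbdd ⟨k, hk, rfl⟩
  -- M ≥ 1
  have hM1 : 1 ≤ M := by
    obtain ⟨a, b, hab⟩ := hnt
    have hk1 : 1 ≤ G.dist a b := hconn.pos_dist_of_ne hab
    have hmem : s(a, b) ∈ S.filter (fun p => d p = G.dist a b) := by
      simp [hS, hd, Sym2.isDiag_iff_proj_eq, hab]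
    have h1 : 1 ≤ gutmanCoeff G (G.dist a b) := by
      rw [hcoeff]
      calc 1 ≤ w s(a, b) := by
            simp only [hw, Sym2.lift_mk]
            exact Nat.one_le_iff_ne_zero.mpr (Nat.mul_ne_zero (hdeg a).ne' (hdeg b).ne')
        _ ≤ _ := Finset.single_le_sum (fun p _ => Nat.zero_le _) hmem
    exact le_trans h1 (hMge _ hk1)
  -- main argument
  by_contra hcon
  push_neg at hcon
  have hMR : (1 : ℝ) ≤ M := by exact_mod_cast hM1
  have hδlt1 : δ < 1 := lt_of_le_of_lt hcon (by
    rw [div_lt_one (by positivity)]; linarith)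
  -- bound the sum
  have hb0 : ∑ k ∈ S.image d, (gutmanCoeff G k : ℝ) * δ ^ k
      ≤ ∑ k ∈ S.image d, (M : ℝ) * δ ^ k := by
    refine Finset.sum_le_sum fun k hk => ?_
    obtain ⟨p, hp, rfl⟩ := Finset.mem_image.mp hk
    have h := hMge _ (hdist1 p hp)
    have h' : (gutmanCoeff G (d p) : ℝ) ≤ M := by exact_mod_cast h
    exact mul_le_mul_of_nonneg_right h' (by positivity)
  have hb1 : ∑ k ∈ S.image d, (gutmanCoeff G k : ℝ) * δ ^ k
      ≤ ∑ k ∈ Finset.Ico 1 n, (M : ℝ) * δ ^ k := by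
    refine hb0.trans (Finset.sum_le_sum_of_subset_of_nonneg ?_ (fun k _ _ => by positivity))
    intro k hk
    obtain ⟨p, hp, rfl⟩ := Finset.mem_image.mp hk
    exact Finset.mem_Ico.mpr ⟨hdist1 p hp, hdistn p hp⟩
  have hgeo : ∑ k ∈ Finset.Ico 1 n, (M : ℝ) * δ ^ k
      = (M : ℝ) * ((δ ^ n - δ ^ 1) / (δ - 1)) := by
    rw [← Finset.mul_sum, geom_sum_Ico (ne_of_lt hδlt1) (by omega)]
  have h1le : (1 : ℝ) ≤ (M : ℝ) * ((δ ^ n - δ ^ 1) / (δ - 1)) := by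
    rw [← hgeo]; rw [hkey] at hroot; linarith [hb1.trans_eq' hroot]
  have hδn : 0 < δ ^ n := by positivity
  have hMδ : (M : ℝ) * δ ≤ 1 - δ := by
    rw [le_div_iff₀ (by positivity)] at hcon
    nlinarith
  have heq : (M : ℝ) * ((δ ^ n - δ ^ 1) / (δ - 1)) = ((M : ℝ) * (δ - δ ^ n)) / (1 - δ) := by
    rw [pow_one, mul_div_assoc]
    congr 1
    rw [div_eq_div_iff (sub_ne_zero.mpr (ne_of_lt hδlt1)) (sub_ne_zero.mpr (ne_of_gt hδlt1))]
    ring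
  rw [heq, le_div_iff₀ (by linarith)] at h1le
  nlinarith [mul_pos (lt_of_lt_of_le one_pos hMR) hδn]
end

section
/- Let G be a finite connected simple graph with at least three vertices, and let δ ∈ (0,1] be a real number satisfying H_e(G,δ) = 1 (equivalently, δ is the unique positive root of the modified edge-Hosoya polynomial H_e*(G,x) = 1 − H_e(G,x)). Then δ > 1/(MH_e(G) + 1). -/
open Finset SimpleGraph

open Finset SimpleGraph in
private lemma line_reach_aux {V : Type*} (G : SimpleGraph V) {u v : V} (w : G.Walk u v) :
    ∀ (e f : G.edgeSet), u ∈ (e : Sym2 V) → v ∈ (f : Sym2 V) →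
      G.lineGraph.Reachable e f := by
  induction w with
  | nil =>
    intro e f hu hv
    by_cases h : e = f
    · exact h ▸ SimpleGraph.Reachable.refl e
    · exact SimpleGraph.Adj.reachable
        (SimpleGraph.lineGraph_adj_iff_exists.2 ⟨h, _, hu, hv⟩)
  | @cons a b c h p ih =>
    intro e f hu hv
    have hab : s(a, b) ∈ G.edgeSet := G.mem_edgeSet.2 h
    set e' : G.edgeSet := ⟨s(a, b), hab⟩ with he'
    have h1 : G.lineGraph.Reachable e e' := by
      by_cases he : e = e'
      · exact he ▸ SimpleGraph.Reachable.refl e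
      · exact SimpleGraph.Adj.reachable
          (SimpleGraph.lineGraph_adj_iff_exists.2 ⟨he, a, hu, by simp [he']⟩)
    exact h1.trans (ih e' f (by simp [he']) hv)

private lemma line_reachable {V : Type*} {G : SimpleGraph V} (hconn : G.Connected)
    (e f : G.edgeSet) : G.lineGraph.Reachable e f := by
  obtain ⟨w⟩ := hconn.preconnected ((e : Sym2 V)).out.1 ((f : Sym2 V)).out.1
  exact line_reach_aux G w e f (Sym2.out_fst_mem _) (Sym2.out_fst_mem _)

private lemma exists_edge_incident {V : Type*} {G : SimpleGraph V} (hconn : G.Connected)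
    {u v : V} (hne : u ≠ v) : ∃ e : G.edgeSet, u ∈ (e : Sym2 V) := by
  obtain ⟨w⟩ := hconn.preconnected u v
  have hnil : ¬ w.Nil := SimpleGraph.Walk.not_nil_of_ne hne
  have hadj := w.adj_snd hnil
  exact ⟨⟨s(u, w.getVert 1), G.mem_edgeSet.2 hadj⟩, by simp⟩

private lemma exists_two_edges {V : Type*} [Fintype V] {G : SimpleGraph V}
    (hconn : G.Connected) (hcard : 3 ≤ Fintype.card V) :
    ∃ e f : G.edgeSet, e ≠ f := by
  classical
  have h1 : 1 < Fintype.card V := by omega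
  obtain ⟨a, b, hab⟩ := Fintype.exists_pair_of_one_lt_card h1
  obtain ⟨e, hae⟩ := exists_edge_incident hconn hab
  obtain ⟨y, hy⟩ := Sym2.mem_iff_exists.1 hae
  have hc : ∃ c : V, c ≠ a ∧ c ≠ y := by
    by_contra hcon
    push_neg at hcon
    have hsub : (Finset.univ : Finset V) ⊆ {a, y} := by
      intro c _
      rcases Classical.em (c = a) with h | h
      · simp [h]
      · simp [hcon c h]
    have := Finset.card_le_card hsub
    have h2 : ({a, y} : Finset V).card ≤ 2 := Finset.card_insert_le _ _ |>.trans (by simp)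
    simp [Finset.card_univ] at this
    omega
  obtain ⟨c, hca, hcy⟩ := hc
  obtain ⟨f, hcf⟩ := exists_edge_incident hconn hca
  refine ⟨f, e, fun h => ?_⟩
  rw [h] at hcf
  rw [hy, Sym2.mem_iff] at hcf
  tauto




open scoped Classical in
/-- The edge-Hosoya polynomial `H_e(G,x)`: the sum over unordered pairs of distinct edges of
`x ^ d(e,f)`, where the distance between two edges is the distance between the corresponding
vertices in the line graph `L(G)` of `G` (no constant term). -/
noncomputable def edgeHosoyaPoly {V : Type*} [Fintype V] (G : SimpleGraph V) (x : ℝ) : ℝ :=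
  ∑ p ∈ Finset.univ.filter (fun p : Sym2 G.edgeSet => ¬ p.IsDiag),
    Sym2.lift ⟨fun e f => x ^ G.lineGraph.dist e f,
      fun e f => by dsimp only; rw [SimpleGraph.dist_comm]⟩ p

open scoped Classical in
/-- `dᵉ_k(G)`: the number of unordered pairs of distinct edges of `G` at distance exactly `k`
(distance measured in the line graph of `G`). -/
noncomputable def edgeDistPairs {V : Type*} [Fintype V] (G : SimpleGraph V) (k : ℕ) : ℕ :=
  (Finset.univ.filter (fun p : Sym2 G.edgeSet => ¬ p.IsDiag ∧
    Sym2.lift ⟨fun e f => G.lineGraph.dist e f, fun _ _ => SimpleGraph.dist_comm⟩ p = k)).card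

/-- `MHₑ(G) = max { dᵉ_k(G) : k ≥ 1 }`. -/
noncomputable def maxEdgeDistPairs {V : Type*} [Fintype V] (G : SimpleGraph V) : ℕ :=
  sSup {m : ℕ | ∃ k, 1 ≤ k ∧ edgeDistPairs G k = m}

open scoped Classical in
/-- **Theorem.** Let `G` be a finite connected simple graph with at least three vertices and let `δ ∈ (0,1]` satisfy `Hₑ(G,δ) = 1` (i.e., `δ` is the unique positive root of `Hₑ*(G,x) = 1 - Hₑ(G,x)`). Then `δ > 1 / (MHₑ(G) + 1)`. -/
theorem edge_wiener_root_index_lower_bound {V : Type*} [Fintype V] (G : SimpleGraph V)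
    (hconn : G.Connected) (hcard : 3 ≤ Fintype.card V)
    (δ : ℝ) (hδ : δ ∈ Set.Ioc (0 : ℝ) 1)
    (hroot : edgeHosoyaPoly G δ = 1) :
    1 / ((maxEdgeDistPairs G : ℝ) + 1) < δ := by
  obtain ⟨hδ0, hδ1⟩ := hδ
  set D : Sym2 G.edgeSet → ℕ :=
    Sym2.lift ⟨fun e f => G.lineGraph.dist e f, fun _ _ => SimpleGraph.dist_comm⟩ with hD
  set S : Finset (Sym2 G.edgeSet) :=
    Finset.univ.filter (fun p : Sym2 G.edgeSet => ¬ p.IsDiag) with hS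
  -- distances of non-diagonal pairs are positive
  have hpos : ∀ p ∈ S, 1 ≤ D p := by
    intro p hp
    rw [hS, Finset.mem_filter] at hp
    induction p using Sym2.ind with
    | _ e f =>
      have hne : e ≠ f := by
        have := hp.2
        rwa [Sym2.mk_isDiag_iff] at this
      have hreach : G.lineGraph.Reachable e f := line_reachable hconn e f
      have := hreach.pos_dist_of_ne hne
      simpa [hD, Sym2.lift_mk] using Nat.one_le_of_lt this
  -- the summand equals δ ^ D p
  have hfun : ∀ p : Sym2 G.edgeSet,
      Sym2.lift ⟨fun e f => δ ^ G.lineGraph.dist e f,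
        fun e f => by dsimp only; rw [SimpleGraph.dist_comm]⟩ p = δ ^ D p := by
    intro p
    induction p using Sym2.ind with
    | _ e f => simp [hD, Sym2.lift_mk]
  -- bddAbove
  have hbdd : BddAbove {m : ℕ | ∃ k, 1 ≤ k ∧ edgeDistPairs G k = m} := by
    refine ⟨Fintype.card (Sym2 G.edgeSet), ?_⟩
    rintro m ⟨k, -, rfl⟩
    exact (Finset.card_filter_le _ _).trans (by simp)
  -- M ≥ 1
  obtain ⟨e0, f0, hef⟩ := exists_two_edges hconn hcard
  have hk0 : 1 ≤ edgeDistPairs G (G.lineGraph.dist e0 f0) := by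
    rw [edgeDistPairs, Finset.one_le_card]
    refine ⟨s(e0, f0), ?_⟩
    simp [Sym2.mk_isDiag_iff, hef, Sym2.lift_mk]
  have hM1 : 1 ≤ maxEdgeDistPairs G :=
    hk0.trans (le_csSup hbdd ⟨G.lineGraph.dist e0 f0, by
      have hreach := (line_reachable hconn e0 f0).pos_dist_of_ne hef
      omega, rfl⟩)
  by_cases hδeq : δ = 1
  · subst hδeq
    rw [div_lt_one (by positivity)]
    have : (1 : ℝ) ≤ (maxEdgeDistPairs G : ℝ) := by exact_mod_cast hM1
    linarith
  · have hδlt : δ < 1 := lt_of_le_of_ne hδ1 hδeq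
    set M := maxEdgeDistPairs G with hM
    have hdk : ∀ k, 1 ≤ k → edgeDistPairs G k ≤ M := fun k hk =>
      le_csSup hbdd ⟨k, hk, rfl⟩
    set T : Finset ℕ := S.image D with hT
    -- rewrite the root equation fiberwise
    have hsum1 : edgeHosoyaPoly G δ = ∑ p ∈ S, δ ^ D p := by
      rw [edgeHosoyaPoly]
      exact Finset.sum_congr rfl fun p _ => hfun p
    have hsum2 : ∑ p ∈ S, δ ^ D p = ∑ k ∈ T, (S.filter (fun p => D p = k)).card * δ ^ k := by
      rw [← Finset.sum_fiberwise_of_maps_to (fun p hp => Finset.mem_image_of_mem D hp)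
        (fun p => δ ^ D p)]
      refine Finset.sum_congr rfl fun k hk => ?_
      rw [Finset.sum_congr rfl (fun p hp => ?_), Finset.sum_const, nsmul_eq_mul]
      rw [(Finset.mem_filter.1 hp).2]
    have hcardk : ∀ k, (S.filter (fun p => D p = k)).card = edgeDistPairs G k := by
      intro k
      rw [edgeDistPairs, hS, Finset.filter_filter]
    have key : (1 : ℝ) = ∑ k ∈ T, (edgeDistPairs G k : ℝ) * δ ^ k := by
      rw [← hroot, hsum1, hsum2]
      exact Finset.sum_congr rfl fun k _ => by rw [hcardk]
    -- every k ∈ T is ≥ 1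
    have hT1 : ∀ k ∈ T, 1 ≤ k := by
      intro k hk
      obtain ⟨p, hp, rfl⟩ := Finset.mem_image.1 hk
      exact hpos p hp
    -- bound each coefficient by M
    have step1 : (1 : ℝ) ≤ (M : ℝ) * ∑ k ∈ T, δ ^ k := by
      rw [key, Finset.mul_sum]
      refine Finset.sum_le_sum fun k hk => ?_
      have : (edgeDistPairs G k : ℝ) ≤ (M : ℝ) := by
        exact_mod_cast hdk k (hT1 k hk)
      have hp : (0:ℝ) ≤ δ ^ k := by positivity
      nlinarith
    -- geometric bound
    set K := T.sup id with hK
    have hsub : T ⊆ Finset.Icc 1 K := by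
      intro k hk
      exact Finset.mem_Icc.2 ⟨hT1 k hk, Finset.le_sup (f := id) hk⟩
    have step2 : ∑ k ∈ T, δ ^ k ≤ ∑ k ∈ Finset.Icc 1 K, δ ^ k :=
      Finset.sum_le_sum_of_subset_of_nonneg hsub (fun k _ _ => by positivity)
    have step3 : ∑ k ∈ Finset.Icc 1 K, δ ^ k = δ * ∑ i ∈ Finset.range K, δ ^ i := by
      rw [← Finset.Ico_add_one_right_eq_Icc, Finset.sum_Ico_eq_sum_range]
      simp [pow_succ, Finset.mul_sum, pow_add, mul_comm]
    have step4 : ∑ i ∈ Finset.range K, δ ^ i < 1 / (1 - δ) := by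
      rw [geom_sum_eq hδeq]
      have h1 : (0:ℝ) < 1 - δ := by linarith
      have heq : (δ ^ K - 1) / (δ - 1) = (1 - δ ^ K) / (1 - δ) := by
        rw [← neg_div_neg_eq]; ring_nf
      rw [heq, div_lt_div_iff₀ h1 h1]
      have : (0:ℝ) < δ ^ K := by positivity
      nlinarith
    have hMpos : (1:ℝ) ≤ (M : ℝ) := by exact_mod_cast hM1
    have final : (1 : ℝ) < (M : ℝ) * (δ * (1 / (1 - δ))) := by
      calc (1:ℝ) ≤ (M:ℝ) * ∑ k ∈ T, δ ^ k := step1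
        _ ≤ (M:ℝ) * (δ * ∑ i ∈ Finset.range K, δ ^ i) := by
            rw [← step3]; exact mul_le_mul_of_nonneg_left step2 (by linarith)
        _ < (M:ℝ) * (δ * (1 / (1 - δ))) := by
            apply mul_lt_mul_of_pos_left _ (by linarith)
            exact mul_lt_mul_of_pos_left step4 hδ0
    rw [div_lt_iff₀ (by positivity)]
    have h1δ : (0:ℝ) < 1 - δ := by linarith
    have heq : (M:ℝ) * (δ * (1 / (1 - δ))) = (M:ℝ) * δ / (1 - δ) := by
      field_simp
    rw [heq] at final
    have final2 := (lt_div_iff₀ h1δ).1 final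
    nlinarith
end

section
/- For each n ≥ 3 let G_n be a finite connected simple graph that is isomorphic to one of: the complete graph K_n on n vertices, the cycle C_n on n vertices, the star S_n on n+1 vertices, the wheel W_n on n+1 vertices, or the path P_n on n vertices. For each n ≥ 3 and each Q ∈ {H, Sc, Gut, H_e}, let δ_n(Q) ∈ (0,1] be the real number with Q(G_n, δ_n(Q)) = 1 (the unique positive root of 1 − Q(G_n,x)). Then for every Q ∈ {H, Sc, Gut, H_e}, the sequence δ_n(Q) converges to 0 as n → ∞. -/
open Filter

/-- The wheel graph `W n` on `n + 1` vertices: a cycle on `n` vertices together with a hub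
vertex (`none`) adjacent to all `n` cycle vertices. -/
def wheelGraph (n : ℕ) : SimpleGraph (Option (Fin n)) where
  Adj a b :=
    match a, b with
    | none, none => False
    | none, some _ => True
    | some _, none => True
    | some i, some j => (SimpleGraph.cycleGraph n).Adj i j
  symm := ⟨by
    rintro (_ | a) (_ | b) h
    · exact h.elim
    · trivial
    · trivial
    · exact (SimpleGraph.cycleGraph n).adj_symm h⟩
  loopless := ⟨by
    rintro (_ | a) h
    · exact h
    · exact (SimpleGraph.cycleGraph n).irrefl h⟩
section Aux
open scoped Classical
open SimpleGraph Finset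

variable {W : Type*} [Fintype W]

/-- A set closed under adjacency contains everything walk-reachable from a member. -/
lemma closed_of_walk {H : SimpleGraph W} {S : Set W}
    (hS : ∀ u ∈ S, ∀ w, H.Adj u w → w ∈ S) {a c : W} (w : H.Walk a c) (ha : a ∈ S) : c ∈ S := by
  induction w with
  | nil => exact ha
  | cons h p ih => exact ih (hS _ ha _ h)

lemma exists_adj_of_connected {H : SimpleGraph W} (hc : H.Connected)
    (h2 : 1 < Fintype.card W) (v : W) : ∃ u, H.Adj v u := by
  obtain ⟨u, hu⟩ := Fintype.exists_ne_of_one_lt_card h2 v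
  obtain ⟨w⟩ := hc.preconnected v u
  cases w with
  | nil => exact absurd rfl hu
  | cons h p => exact ⟨_, h⟩

lemma lineGraph_exists_adj {H : SimpleGraph W} (hc : H.Connected)
    (h3 : 3 ≤ Fintype.card W) (e : H.edgeSet) : ∃ f, H.lineGraph.Adj e f := by
  obtain ⟨e, he⟩ := e
  induction e using Sym2.ind with
  | _ a b =>
    rw [SimpleGraph.mem_edgeSet] at he
    by_contra hno
    push_neg at hno
    -- {a, b} is closed under adjacency
    have hclosed : ∀ u ∈ ({a, b} : Set W), ∀ w, H.Adj u w → w ∈ ({a, b} : Set W) := by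
      intro u hu w haw
      by_contra hw
      simp only [Set.mem_insert_iff, Set.mem_singleton_iff, not_or] at hw hu
      have hf : s(u, w) ∈ H.edgeSet := haw
      refine hno ⟨s(u, w), hf⟩ ?_
      rw [SimpleGraph.lineGraph_adj_iff_exists]
      constructor
      · intro hEq
        have heq : s(a, b) = s(u, w) := Subtype.mk_eq_mk.mp hEq
        have hwmem : w ∈ s(a, b) := heq ▸ Sym2.mem_mk_right u w
        rw [Sym2.mem_iff] at hwmem
        rcases hwmem with rfl | rfl
        · exact hw.1 rfl
        · exact hw.2 rfl
      · exact ⟨u, by rcases hu with rfl | rfl <;> simp, by simp⟩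
    obtain ⟨c, hca, hcb⟩ : ∃ c : W, c ≠ a ∧ c ≠ b := by
      by_contra h
      push_neg at h
      have hsub : (Finset.univ : Finset W) ⊆ {a, b} := by
        intro x _
        rcases eq_or_ne x a with rfl | hx
        · simp
        · simp [h x hx]
      have := Finset.card_le_card hsub
      have h2 : ({a, b} : Finset W).card ≤ 2 := Finset.card_insert_le _ _ |>.trans (by simp)
      rw [Finset.card_univ] at this
      omega
    obtain ⟨w⟩ := hc.preconnected a c
    have := closed_of_walk hclosed w (by simp)
    simp only [Set.mem_insert_iff, Set.mem_singleton_iff] at this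
    tauto

end Aux
section Aux2
open scoped Classical
open SimpleGraph Finset

variable {W : Type*} [Fintype W]

lemma edgeFinset_subset_nondiag (H : SimpleGraph W) :
    H.edgeFinset ⊆ Finset.univ.filter (fun p : Sym2 W => ¬ p.IsDiag) := fun p hp =>
  Finset.mem_filter.mpr ⟨Finset.mem_univ _, H.not_isDiag_of_mem_edgeFinset hp⟩

lemma card_le_two_mul_edges (H : SimpleGraph W) (hnb : ∀ v : W, ∃ u, H.Adj v u) :
    Fintype.card W ≤ 2 * #H.edgeFinset := by
  calc Fintype.card W = ∑ _v : W, 1 := by simp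
    _ ≤ ∑ v : W, H.degree v :=
        Finset.sum_le_sum fun v _ => (H.degree_pos_iff_exists_adj v).mpr (hnb v)
    _ = 2 * #H.edgeFinset := H.sum_degrees_eq_twice_card_edges

lemma key_hosoya (H : SimpleGraph W) {x : ℝ} (hx0 : 0 < x)
    (hnb : ∀ v : W, ∃ u, H.Adj v u) (h1 : hosoyaPoly H x = 1) :
    (Fintype.card W : ℝ) * x ≤ 2 := by
  have hm : (#H.edgeFinset : ℝ) * x ≤ 1 := by
    rw [← h1]
    unfold hosoyaPoly
    calc (#H.edgeFinset : ℝ) * x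
        = ∑ p ∈ H.edgeFinset, Sym2.lift ⟨fun a b => x ^ H.dist a b,
            fun a b => by dsimp only; rw [SimpleGraph.dist_comm]⟩ p := by
          rw [Finset.sum_congr rfl (fun p hp => ?_), Finset.sum_const, nsmul_eq_mul]
          induction p using Sym2.ind with
          | _ a b =>
            rw [Sym2.lift_mk]
            show x ^ H.dist a b = x
            rw [SimpleGraph.dist_eq_one_iff_adj.mpr
              (by rwa [SimpleGraph.mem_edgeFinset, SimpleGraph.mem_edgeSet] at hp), pow_one]
      _ ≤ _ := by
          refine Finset.sum_le_sum_of_subset_of_nonneg (edgeFinset_subset_nondiag H) ?_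
          intro p _ _
          induction p using Sym2.ind with
          | _ a b => rw [Sym2.lift_mk]; positivity
  have hc := card_le_two_mul_edges H hnb
  calc (Fintype.card W : ℝ) * x ≤ ((2 * #H.edgeFinset : ℕ) : ℝ) * x := by
        exact mul_le_mul_of_nonneg_right (by exact_mod_cast hc) hx0.le
    _ = 2 * ((#H.edgeFinset : ℝ) * x) := by push_cast; ring
    _ ≤ 2 * 1 := by linarith
    _ = 2 := by norm_num

lemma key_schultz (H : SimpleGraph W) {x : ℝ} (hx0 : 0 < x)
    (hnb : ∀ v : W, ∃ u, H.Adj v u) (h1 : schultzPoly H x = 1) :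
    (Fintype.card W : ℝ) * x ≤ 2 := by
  have hm : (#H.edgeFinset : ℝ) * x ≤ 1 := by
    rw [← h1]
    unfold schultzPoly
    calc (#H.edgeFinset : ℝ) * x
        = ∑ _p ∈ H.edgeFinset, x := by rw [Finset.sum_const, nsmul_eq_mul]
      _ ≤ ∑ p ∈ H.edgeFinset, Sym2.lift ⟨fun a b => ((H.degree a : ℝ) + (H.degree b : ℝ)) * x ^ H.dist a b,
            fun a b => by dsimp only; rw [SimpleGraph.dist_comm]; ring⟩ p := by
          refine Finset.sum_le_sum fun p hp => ?_
          induction p using Sym2.ind with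
          | _ a b =>
            rw [SimpleGraph.mem_edgeFinset, SimpleGraph.mem_edgeSet] at hp
            rw [Sym2.lift_mk]
            show x ≤ ((H.degree a : ℝ) + (H.degree b : ℝ)) * x ^ H.dist a b
            rw [SimpleGraph.dist_eq_one_iff_adj.mpr hp, pow_one]
            have hda : 1 ≤ (H.degree a : ℝ) := by
              exact_mod_cast (H.degree_pos_iff_exists_adj a).mpr ⟨b, hp⟩
            have hdb : 0 ≤ (H.degree b : ℝ) := by positivity
            nlinarith
      _ ≤ _ := by
          refine Finset.sum_le_sum_of_subset_of_nonneg (edgeFinset_subset_nondiag H) ?_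
          intro p _ _
          induction p using Sym2.ind with
          | _ a b => rw [Sym2.lift_mk]; positivity
  have hc := card_le_two_mul_edges H hnb
  calc (Fintype.card W : ℝ) * x ≤ ((2 * #H.edgeFinset : ℕ) : ℝ) * x := by
        exact mul_le_mul_of_nonneg_right (by exact_mod_cast hc) hx0.le
    _ = 2 * ((#H.edgeFinset : ℝ) * x) := by push_cast; ring
    _ ≤ 2 * 1 := by linarith
    _ = 2 := by norm_num

lemma key_gutman (H : SimpleGraph W) {x : ℝ} (hx0 : 0 < x)
    (hnb : ∀ v : W, ∃ u, H.Adj v u) (h1 : gutmanPoly H x = 1) :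
    (Fintype.card W : ℝ) * x ≤ 2 := by
  have hm : (#H.edgeFinset : ℝ) * x ≤ 1 := by
    rw [← h1]
    unfold gutmanPoly
    calc (#H.edgeFinset : ℝ) * x
        = ∑ _p ∈ H.edgeFinset, x := by rw [Finset.sum_const, nsmul_eq_mul]
      _ ≤ ∑ p ∈ H.edgeFinset, Sym2.lift ⟨fun a b => ((H.degree a : ℝ) * (H.degree b : ℝ)) * x ^ H.dist a b,
            fun a b => by dsimp only; rw [SimpleGraph.dist_comm]; ring⟩ p := by
          refine Finset.sum_le_sum fun p hp => ?_
          induction p using Sym2.ind with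
          | _ a b =>
            rw [SimpleGraph.mem_edgeFinset, SimpleGraph.mem_edgeSet] at hp
            rw [Sym2.lift_mk]
            show x ≤ ((H.degree a : ℝ) * (H.degree b : ℝ)) * x ^ H.dist a b
            rw [SimpleGraph.dist_eq_one_iff_adj.mpr hp, pow_one]
            have hda : 1 ≤ (H.degree a : ℝ) := by
              exact_mod_cast (H.degree_pos_iff_exists_adj a).mpr ⟨b, hp⟩
            have hdb : 1 ≤ (H.degree b : ℝ) := by
              exact_mod_cast (H.degree_pos_iff_exists_adj b).mpr ⟨a, hp.symm⟩
            have hprod : (1 : ℝ) ≤ (H.degree a : ℝ) * (H.degree b : ℝ) := by nlinarith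
            nlinarith
      _ ≤ _ := by
          refine Finset.sum_le_sum_of_subset_of_nonneg (edgeFinset_subset_nondiag H) ?_
          intro p _ _
          induction p using Sym2.ind with
          | _ a b => rw [Sym2.lift_mk]; positivity
  have hc := card_le_two_mul_edges H hnb
  calc (Fintype.card W : ℝ) * x ≤ ((2 * #H.edgeFinset : ℕ) : ℝ) * x := by
        exact mul_le_mul_of_nonneg_right (by exact_mod_cast hc) hx0.le
    _ = 2 * ((#H.edgeFinset : ℝ) * x) := by push_cast; ring
    _ ≤ 2 * 1 := by linarith
    _ = 2 := by norm_num

lemma edgeHosoya_eq_hosoya_lineGraph (H : SimpleGraph W) (x : ℝ) :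
    edgeHosoyaPoly H x = hosoyaPoly H.lineGraph x := by
  unfold edgeHosoyaPoly hosoyaPoly
  congr!

end Aux2
section Aux3
open scoped Classical
open SimpleGraph Finset

lemma key_edgeHosoya {W : Type*} [Fintype W] (H : SimpleGraph W) (hcon : H.Connected)
    (h3 : 3 ≤ Fintype.card W) {x : ℝ} (hx0 : 0 < x) (h1 : edgeHosoyaPoly H x = 1) :
    (Fintype.card W : ℝ) * x ≤ 4 := by
  have hnbL := lineGraph_exists_adj hcon h3
  have h1' : hosoyaPoly H.lineGraph x = 1 := by
    rw [← edgeHosoya_eq_hosoya_lineGraph]; exact h1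
  have hkey := key_hosoya H.lineGraph hx0 hnbL h1'
  have hnbV : ∀ v, ∃ u, H.Adj v u := fun v => exists_adj_of_connected hcon (by omega) v
  have hc : Fintype.card W ≤ 2 * Fintype.card H.edgeSet := by
    have h := card_le_two_mul_edges H hnbV
    rwa [SimpleGraph.edgeFinset, Set.toFinset_card] at h
  calc (Fintype.card W : ℝ) * x ≤ ((2 * Fintype.card H.edgeSet : ℕ) : ℝ) * x :=
        mul_le_mul_of_nonneg_right (by exact_mod_cast hc) hx0.le
    _ = 2 * ((Fintype.card H.edgeSet : ℝ) * x) := by push_cast; ring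
    _ ≤ 2 * 2 := by linarith
    _ = 4 := by norm_num

lemma completeBipartite_connected (n : ℕ) :
    (completeBipartiteGraph (Fin 1) (Fin n)).Connected := by
  have hr : ∀ x : Fin 1 ⊕ Fin n, (completeBipartiteGraph (Fin 1) (Fin n)).Reachable x (Sum.inl 0) := by
    rintro (a | b)
    · rw [Subsingleton.elim a 0]
    · exact (SimpleGraph.Adj.reachable (by simp))
  have : Nonempty (Fin 1 ⊕ Fin n) := ⟨Sum.inl 0⟩
  exact ⟨fun u v => (hr u).trans (hr v).symm⟩

lemma wheelGraph_connected (n : ℕ) : (wheelGraph n).Connected := by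
  have hr : ∀ x : Option (Fin n), (wheelGraph n).Reachable x none := by
    rintro (_ | i)
    · rfl
    · exact SimpleGraph.Adj.reachable (by trivial)
  have : Nonempty (Option (Fin n)) := ⟨none⟩
  exact ⟨fun u v => (hr u).trans (hr v).symm⟩

lemma cycleGraph_connected' {n : ℕ} (h : 3 ≤ n) : (SimpleGraph.cycleGraph n).Connected := by
  obtain ⟨m, rfl⟩ : ∃ m, n = m + 1 := ⟨n - 1, by omega⟩
  exact SimpleGraph.cycleGraph_connected

lemma pathGraph_connected' {n : ℕ} (h : 3 ≤ n) : (SimpleGraph.pathGraph n).Connected := by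
  obtain ⟨m, rfl⟩ : ∃ m, n = m + 1 := ⟨n - 1, by omega⟩
  exact SimpleGraph.pathGraph_connected m

lemma completeGraph_connected' {n : ℕ} (h : 3 ≤ n) : (completeGraph (Fin n)).Connected := by
  have : Nonempty (Fin n) := ⟨⟨0, by omega⟩⟩
  rw [completeGraph_eq_top]
  exact SimpleGraph.connected_top

end Aux3

/-- **Corollary.** For each `n ≥ 3` let `Gₙ` be a finite connected simple graph isomorphic to
one of: the complete graph `Kₙ`, the cycle `Cₙ`, the star `Sₙ = K_{1,n}` (on `n+1` vertices),
the wheel `Wₙ` (on `n+1` vertices), or the path `Pₙ`. For each `Q ∈ {H, Sc, Gut, Hₑ}` let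
`δₙ(Q) ∈ (0,1]` be the unique positive root of `1 - Q(Gₙ, x)`, i.e. `Q(Gₙ, δₙ(Q)) = 1`.
Then each of the four sequences `δₙ(Q)` converges to `0` as `n → ∞`. -/
theorem root_indices_tendsto_zero
    (V : ℕ → Type) [∀ n, Fintype (V n)] (G : ∀ n, SimpleGraph (V n))
    (hG : ∀ n, 3 ≤ n →
      Nonempty (G n ≃g SimpleGraph.completeGraph (Fin n)) ∨
      Nonempty (G n ≃g SimpleGraph.cycleGraph n) ∨
      Nonempty (G n ≃g completeBipartiteGraph (Fin 1) (Fin n)) ∨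
      Nonempty (G n ≃g wheelGraph n) ∨
      Nonempty (G n ≃g SimpleGraph.pathGraph n))
    (δH δSc δGut δHe : ℕ → ℝ)
    (hδH : ∀ n, 3 ≤ n → δH n ∈ Set.Ioc (0 : ℝ) 1 ∧ hosoyaPoly (G n) (δH n) = 1)
    (hδSc : ∀ n, 3 ≤ n → δSc n ∈ Set.Ioc (0 : ℝ) 1 ∧ schultzPoly (G n) (δSc n) = 1)
    (hδGut : ∀ n, 3 ≤ n → δGut n ∈ Set.Ioc (0 : ℝ) 1 ∧ gutmanPoly (G n) (δGut n) = 1)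
    (hδHe : ∀ n, 3 ≤ n → δHe n ∈ Set.Ioc (0 : ℝ) 1 ∧ edgeHosoyaPoly (G n) (δHe n) = 1) :
    Tendsto δH atTop (nhds 0) ∧ Tendsto δSc atTop (nhds 0) ∧
    Tendsto δGut atTop (nhds 0) ∧ Tendsto δHe atTop (nhds 0) := by

  classical
  -- Step 1: each `G n` (for `n ≥ 3`) is connected and has at least `n` vertices.
  have hbase : ∀ n, 3 ≤ n → (G n).Connected ∧ n ≤ Fintype.card (V n) := by
    intro n hn
    rcases hG n hn with ⟨⟨e⟩⟩ | ⟨⟨e⟩⟩ | ⟨⟨e⟩⟩ | ⟨⟨e⟩⟩ | ⟨⟨e⟩⟩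
    · exact ⟨e.connected_iff.mpr (completeGraph_connected' hn), by rw [e.card_eq]; simp⟩
    · exact ⟨e.connected_iff.mpr (cycleGraph_connected' hn), by rw [e.card_eq]; simp⟩
    · refine ⟨e.connected_iff.mpr (completeBipartite_connected n), ?_⟩
      rw [e.card_eq]; simp
    · refine ⟨e.connected_iff.mpr (wheelGraph_connected n), ?_⟩
      rw [e.card_eq]; simp
    · exact ⟨e.connected_iff.mpr (pathGraph_connected' hn), by rw [e.card_eq]; simp⟩
  -- Step 2: a generic squeeze argument
  have tend : ∀ (δ : ℕ → ℝ), (∀ n, 3 ≤ n → 0 < δ n ∧ δ n ≤ 4 / n) →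
      Tendsto δ atTop (nhds 0) := by
    intro δ hδ
    have h4 : Tendsto (fun n : ℕ => 4 / (n : ℝ)) atTop (nhds 0) :=
      tendsto_const_div_atTop_nhds_zero_nat 4
    refine tendsto_of_tendsto_of_tendsto_of_le_of_le'
      (tendsto_const_nhds : Tendsto (fun _ : ℕ => (0:ℝ)) atTop (nhds 0)) h4 ?_ ?_
    · filter_upwards [eventually_ge_atTop 3] with n hn
      exact (hδ n hn).1.le
    · filter_upwards [eventually_ge_atTop 3] with n hn
      exact (hδ n hn).2
  have convert_bound : ∀ (n : ℕ) (x : ℝ), 3 ≤ n → 0 < x →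
      (Fintype.card (V n) : ℝ) * x ≤ 4 → x ≤ 4 / n := by
    intro n x hn hx0 hb
    have hcard := (hbase n hn).2
    have hnpos : (0:ℝ) < (n:ℝ) := by exact_mod_cast (by omega : 0 < n)
    rw [le_div_iff₀ hnpos]
    have : (n : ℝ) ≤ (Fintype.card (V n) : ℝ) := by exact_mod_cast hcard
    nlinarith
  have hnb : ∀ n, 3 ≤ n → ∀ v : V n, ∃ u, (G n).Adj v u := by
    intro n hn v
    exact exists_adj_of_connected (hbase n hn).1 (by have := (hbase n hn).2; omega) v
  refine ⟨tend _ ?_, tend _ ?_, tend _ ?_, tend _ ?_⟩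
  · intro n hn
    obtain ⟨⟨hx0, hx1⟩, heq⟩ := hδH n hn
    refine ⟨hx0, convert_bound n _ hn hx0 ?_⟩
    have := key_hosoya (G n) hx0 (hnb n hn) heq
    linarith
  · intro n hn
    obtain ⟨⟨hx0, hx1⟩, heq⟩ := hδSc n hn
    refine ⟨hx0, convert_bound n _ hn hx0 ?_⟩
    have := key_schultz (G n) hx0 (hnb n hn) heq
    linarith
  · intro n hn
    obtain ⟨⟨hx0, hx1⟩, heq⟩ := hδGut n hn
    refine ⟨hx0, convert_bound n _ hn hx0 ?_⟩
    have := key_gutman (G n) hx0 (hnb n hn) heq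
    linarith
  · intro n hn
    obtain ⟨⟨hx0, hx1⟩, heq⟩ := hδHe n hn
    refine ⟨hx0, convert_bound n _ hn hx0 ?_⟩
    exact key_edgeHosoya (G n) (hbase n hn).1 (by have := (hbase n hn).2; omega) hx0 heq
end

section
/- Let G be a finite connected simple graph with at least one edge, and let δ ∈ (0,1] satisfy Gut(G,δ) = 1 (δ is the unique positive root of Gut*(G,x) = 1 − Gut(G,x)). Then δ = 1 if and only if G is isomorphic to the path P₂ on two vertices. -/
open Finset SimpleGraph

section

variable {V : Type*} [Fintype V]

open scoped Classical in
theorem Sym2.card_filter_not_isDiag :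
    #(univ.filter fun p : Sym2 V => ¬p.IsDiag) = (Fintype.card V).choose 2 := by
  rw [← Sym2.card_subtype_not_diag, Fintype.card_subtype]

theorem Nat.le_two_of_choose_two_le_one {n : ℕ} (h : n.choose 2 ≤ 1) : n ≤ 2 := by
  contrapose! h
  calc 1 < (3 : ℕ).choose 2 := by decide
    _ ≤ n.choose 2 := Nat.choose_le_choose 2 h

open scoped Classical in
theorem gutmanPoly_top (x : ℝ) :
    gutmanPoly (⊤ : SimpleGraph V) x =
      (Fintype.card V).choose 2 * ((Fintype.card V - 1 : ℕ) : ℝ) ^ 2 * x := by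
  -- stated for every instance, since `gutmanPoly` counts degrees with the classical one
  have hdeg (c : V) [Fintype ((⊤ : SimpleGraph V).neighborSet c)] :
      (⊤ : SimpleGraph V).degree c = Fintype.card V - 1 := by
    convert complete_graph_degree c
  rw [gutmanPoly, ← Sym2.card_filter_not_isDiag, mul_assoc, ← nsmul_eq_mul, ← sum_const]
  refine sum_congr rfl fun p hp => ?_
  induction p with
  | _ a b =>
    have hab : a ≠ b := by simpa using hp
    simp [hdeg, dist_eq_one_iff_adj.mpr ((top_adj a b).mpr hab), sq]

open scoped Classical in
theorem choose_two_le_gutmanPoly_one (G : SimpleGraph V) (hG : ∀ a, ¬G.IsIsolated a) :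
    ((Fintype.card V).choose 2 : ℝ) ≤ gutmanPoly G 1 := by
  have hdeg (a : V) : (1 : ℝ) ≤ G.degree a := Nat.one_le_cast.mpr ((G.degree_pos a).mpr (hG a))
  rw [gutmanPoly, ← Sym2.card_filter_not_isDiag, ← mul_one (#_ : ℝ), ← nsmul_eq_mul]
  refine card_nsmul_le_sum _ _ _ fun p _ => ?_
  induction p with
  | _ a b => simpa using one_le_mul_of_one_le_of_one_le (hdeg a) (hdeg b)

theorem eq_top_of_adj_of_card_eq_two {G : SimpleGraph V} {u v : V} (huv : G.Adj u v)
    (hcard : Fintype.card V = 2) : G = ⊤ := by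
  classical
  have huniv : ({u, v} : Finset V) = univ :=
    eq_univ_of_card _ (by rw [card_pair huv.ne, hcard])
  have hmem (a : V) : a = u ∨ a = v := by simpa [← huniv] using mem_univ a
  ext a b
  refine ⟨Adj.ne, fun hab => ?_⟩
  rcases hmem a with rfl | rfl <;> rcases hmem b with rfl | rfl <;>
    first | exact huv | exact huv.symm | exact absurd rfl hab

theorem nonempty_iso_pathGraph_two_iff (G : SimpleGraph V) :
    Nonempty (G ≃g pathGraph 2) ↔ Fintype.card V = 2 ∧ G = ⊤ := by
  rw [pathGraph_two_eq_top]
  constructor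
  · rintro ⟨e⟩
    refine ⟨by simpa using Fintype.card_congr e.toEquiv, ?_⟩
    ext a b
    rw [← e.map_adj_iff]
    simp [e.injective.ne_iff]
  · rintro ⟨hcard, rfl⟩
    exact ⟨Iso.completeGraph (Fintype.equivFinOfCardEq hcard)⟩

end

theorem gutman_root_index_eq_one_iff_general {V : Type*} [Fintype V] (G : SimpleGraph V)
    (hconn : G.Connected) (hedge : G.edgeSet.Nonempty)
    (δ : ℝ)
    (hroot : gutmanPoly G δ = 1) :
    δ = 1 ↔ Nonempty (G ≃g SimpleGraph.pathGraph 2) := by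
  obtain ⟨u, v, huv⟩ := ne_bot_iff_exists_adj.mp (edgeSet_nonempty.mp hedge)
  have : Nontrivial V := ⟨u, v, huv.ne⟩
  rw [nonempty_iso_pathGraph_two_iff]
  constructor
  · rintro rfl
    have hcard : Fintype.card V ≤ 2 := Nat.le_two_of_choose_two_le_one <| by
      exact_mod_cast (choose_two_le_gutmanPoly_one G
        hconn.preconnected.not_isIsolated).trans hroot.le
    have hcard2 : Fintype.card V = 2 := hcard.antisymm Fintype.one_lt_card
    exact ⟨hcard2, eq_top_of_adj_of_card_eq_two huv hcard2⟩
  · rintro ⟨hcard, rfl⟩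
    simpa [gutmanPoly_top, hcard] using hroot

/-- **Proposition.** Let `G` be a finite connected simple graph with at least one edge and let
`δ ∈ (0,1]` satisfy `Gut(G,δ) = 1` (i.e., `δ` is the unique positive root of
`Gut*(G,x) = 1 - Gut(G,x)`). Then `δ = 1` if and only if `G` is isomorphic to the path `P₂`
on two vertices. -/
theorem gutman_root_index_eq_one_iff {V : Type*} [Fintype V] (G : SimpleGraph V)
    (hconn : G.Connected) (hedge : G.edgeSet.Nonempty)
    (δ : ℝ) (hδ : δ ∈ Set.Ioc (0 : ℝ) 1)
    (hroot : gutmanPoly G δ = 1) :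
    δ = 1 ↔ Nonempty (G ≃g SimpleGraph.pathGraph 2) :=
  gutman_root_index_eq_one_iff_general G hconn hedge δ hroot
end

section
/- Let G be a finite connected simple graph with at least two edges, and let δ ∈ (0,1] satisfy H_e(G,δ) = 1 (δ is the unique positive root of H_e*(G,x) = 1 − H_e(G,x)). Then δ = 1 if and only if G is isomorphic to the path P₃ on three vertices. -/
open SimpleGraph


lemma closure_walk {V : Type*} {G : SimpleGraph V} {S : Set V}
    (hS : ∀ u v, G.Adj u v → u ∈ S → v ∈ S) :
    ∀ {u v : V} (_ : G.Walk u v), u ∈ S → v ∈ S := by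
  intro u v w
  induction w with
  | nil => exact id
  | cons h _ ih => exact fun hu => ih (hS _ _ h hu)

lemma structure_two_edges {V : Type*} {G : SimpleGraph V}
    (hconn : G.Connected) (e₁ e₂ : Sym2 V) (hne : e₁ ≠ e₂)
    (hE : G.edgeSet = {e₁, e₂}) :
    ∃ a b c : V, a ≠ b ∧ b ≠ c ∧ a ≠ c ∧
      G.edgeSet = {s(a,b), s(b,c)} ∧ (∀ v : V, v = a ∨ v = b ∨ v = c) := by
  have he₁ : e₁ ∈ G.edgeSet := by rw [hE]; simp
  have he₂ : e₂ ∈ G.edgeSet := by rw [hE]; simp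
  have hshare : ∃ x, x ∈ e₁ ∧ x ∈ e₂ := by
    by_contra hx
    push_neg at hx
    obtain ⟨c, d, rfl⟩ : ∃ c d, e₂ = s(c, d) :=
      ⟨e₂.out.1, e₂.out.2, by exact (Quot.out_eq e₂).symm⟩
    obtain ⟨a, b, rfl⟩ : ∃ a b, e₁ = s(a, b) :=
      ⟨e₁.out.1, e₁.out.2, by exact (Quot.out_eq e₁).symm⟩
    have hcl : ∀ u v, G.Adj u v → u ∈ (s(a,b) : Sym2 V) → v ∈ (s(a,b) : Sym2 V) := by
      intro u v huv hu
      have : s(u, v) ∈ G.edgeSet := huv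
      rw [hE] at this
      rcases this with h | h
      · rw [← h]; exact Sym2.mem_mk_right u v
      · exact absurd (h ▸ Sym2.mem_mk_left u v) (hx u hu)
    have hreach := (hconn a c).elim fun w => closure_walk hcl w (Sym2.mem_mk_left a b)
    exact hx c hreach (Sym2.mem_mk_left c d)
  obtain ⟨b, hb₁, hb₂⟩ := hshare
  set a := Sym2.Mem.other hb₁ with ha
  set c := Sym2.Mem.other hb₂ with hc
  have he₁' : e₁ = s(a, b) := by rw [ha, Sym2.eq_swap]; exact (Sym2.other_spec hb₁).symm
  have he₂' : e₂ = s(b, c) := (Sym2.other_spec hb₂).symm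
  have hab : a ≠ b := fun h => (G.not_isDiag_of_mem_edgeSet he₁) (by rw [he₁', h]; simp)
  have hbc : b ≠ c := fun h => (G.not_isDiag_of_mem_edgeSet he₂) (by rw [he₂', h]; simp)
  have hac : a ≠ c := by
    intro h
    apply hne
    rw [he₁', he₂', h, Sym2.eq_swap]
  refine ⟨a, b, c, hab, hbc, hac, by rw [hE, he₁', he₂'], ?_⟩
  intro v
  have hcl : ∀ u w, G.Adj u w → (u = a ∨ u = b ∨ u = c) → (w = a ∨ w = b ∨ w = c) := by
    intro u w huw _
    have : s(u, w) ∈ G.edgeSet := huw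
    rw [hE, he₁', he₂'] at this
    rcases this with h | h
    · have hw : w ∈ (s(a,b) : Sym2 V) := h ▸ Sym2.mem_mk_right u w
      rcases Sym2.mem_iff.mp hw with rfl | rfl
      · left; rfl
      · right; left; rfl
    · have hw : w ∈ (s(b,c) : Sym2 V) := h ▸ Sym2.mem_mk_right u w
      rcases Sym2.mem_iff.mp hw with rfl | rfl
      · right; left; rfl
      · right; right; rfl
  exact (hconn a v).elim fun w => closure_walk hcl w (Or.inl rfl)

lemma nonempty_iso_pathGraph {V : Type*} {G : SimpleGraph V} {a b c : V}
    (hab : a ≠ b) (hbc : b ≠ c) (hac : a ≠ c)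
    (hE : G.edgeSet = {s(a,b), s(b,c)}) (hV : ∀ v : V, v = a ∨ v = b ∨ v = c) :
    Nonempty (G ≃g SimpleGraph.pathGraph 3) := by
  classical
  refine ⟨⟨⟨fun v => if v = a then (0 : Fin 3) else if v = b then 1 else 2, ![a,b,c],
    ?_, ?_⟩, ?_⟩⟩
  · intro v
    rcases hV v with rfl | rfl | rfl <;>
      simp [hab, hbc, hac, hab.symm, hbc.symm, hac.symm]
  · intro i
    fin_cases i <;> simp [hab, hbc, hac, hab.symm, hbc.symm, hac.symm]
  · intro u v
    simp only [Equiv.coe_fn_mk]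
    rw [show G.Adj u v ↔ s(u,v) ∈ ({s(a,b), s(b,c)} : Set (Sym2 V)) by
      rw [← hE]; exact (SimpleGraph.mem_edgeSet G).symm]
    rcases hV u with rfl | rfl | rfl <;> rcases hV v with rfl | rfl | rfl <;>
      simp [Sym2.eq_iff, SimpleGraph.pathGraph_adj, hab, hbc, hac,
        hab.symm, hbc.symm, hac.symm]

lemma pathGraph3_ncard : (SimpleGraph.pathGraph 3).edgeSet.ncard = 2 := by
  have : (SimpleGraph.pathGraph 3).edgeSet = {s((0 : Fin 3), 1), s(1, 2)} := by
    ext e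
    induction e using Sym2.ind with
    | _ x y =>
      simp only [SimpleGraph.mem_edgeSet, SimpleGraph.pathGraph_adj, Set.mem_insert_iff,
        Set.mem_singleton_iff, Sym2.eq_iff]
      fin_cases x <;> fin_cases y <;> decide
  rw [this]
  exact Set.ncard_pair (by decide)


/-- **Proposition.** Let `G` be a finite connected simple graph with at least two edges and let
`δ ∈ (0,1]` satisfy `Hₑ(G,δ) = 1` (i.e., `δ` is the unique positive root of
`Hₑ*(G,x) = 1 - Hₑ(G,x)`). Then `δ = 1` if and only if `G` is isomorphic to the path `P₃`
on three vertices. -/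
theorem edge_wiener_root_index_eq_one_iff {V : Type*} [Fintype V] (G : SimpleGraph V)
    (hconn : G.Connected) (hedge : 2 ≤ G.edgeSet.ncard)
    (δ : ℝ) (hδ : δ ∈ Set.Ioc (0 : ℝ) 1)
    (hroot : edgeHosoyaPoly G δ = 1) :
    δ = 1 ↔ Nonempty (G ≃g SimpleGraph.pathGraph 3) := by
  classical
  obtain ⟨hδ0, hδ1⟩ := hδ
  unfold edgeHosoyaPoly at hroot
  have hcfilter : (Finset.univ.filter (fun p : Sym2 G.edgeSet => ¬ p.IsDiag)).card
      = (Fintype.card G.edgeSet).choose 2 := by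
    rw [← Sym2.card_subtype_not_diag]
    exact (Fintype.card_subtype _).symm
  have hncard : G.edgeSet.ncard = Fintype.card G.edgeSet := by
    rw [← Nat.card_coe_set_eq, Nat.card_eq_fintype_card]
  constructor
  · rintro rfl
    have hone : ∀ p ∈ Finset.univ.filter (fun p : Sym2 G.edgeSet => ¬ p.IsDiag),
        Sym2.lift ⟨fun e f => (1:ℝ) ^ G.lineGraph.dist e f,
          fun e f => by dsimp only; rw [SimpleGraph.dist_comm]⟩ p = 1 := by
      intro p _
      induction p using Sym2.ind with
      | _ e f => simp
    rw [Finset.sum_congr rfl hone, Finset.sum_const, nsmul_eq_mul, mul_one] at hroot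
    have hc1 : (Finset.univ.filter (fun p : Sym2 G.edgeSet => ¬ p.IsDiag)).card = 1 := by
      exact_mod_cast hroot
    rw [hcfilter] at hc1
    have hm2 : Fintype.card G.edgeSet = 2 := by
      by_contra h
      have h3 : 3 ≤ Fintype.card ↥G.edgeSet := by omega
      have h4 := Nat.choose_le_choose 2 h3
      rw [show Nat.choose 3 2 = 3 from rfl] at h4
      omega
    have hn2 : G.edgeSet.ncard = 2 := by rw [hncard, hm2]
    obtain ⟨e₁, e₂, hne, hE⟩ := Set.ncard_eq_two.mp hn2
    obtain ⟨a, b, c, hab, hbc, hac, hE', hV⟩ := structure_two_edges hconn e₁ e₂ hne hE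
    exact nonempty_iso_pathGraph hab hbc hac hE' hV
  · rintro ⟨φ⟩
    have hn2 : G.edgeSet.ncard = 2 := by
      rw [← Nat.card_coe_set_eq, Nat.card_congr φ.mapEdgeSet,
        Nat.card_coe_set_eq, pathGraph3_ncard]
    obtain ⟨e₁, e₂, hne, hE⟩ := Set.ncard_eq_two.mp hn2
    obtain ⟨a, b, c, hab, hbc, hac, hE', hV⟩ := structure_two_edges hconn e₁ e₂ hne hE
    have hbmem : ∀ e : G.edgeSet, b ∈ (e : Sym2 V) := by
      intro e
      have he := Set.ext_iff.mp hE' (e : Sym2 V) |>.mp e.2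
      rcases he with h | h
      · rw [h]; exact Sym2.mem_mk_right a b
      · rw [h]; exact Sym2.mem_mk_left b c
    have hc1 : (Finset.univ.filter (fun p : Sym2 G.edgeSet => ¬ p.IsDiag)).card = 1 := by
      rw [hcfilter, ← hncard, hn2]
      decide
    obtain ⟨p0, hp0⟩ := Finset.card_eq_one.mp hc1
    rw [hp0, Finset.sum_singleton] at hroot
    have hp0mem : p0 ∈ Finset.univ.filter (fun p : Sym2 G.edgeSet => ¬ p.IsDiag) := by
      rw [hp0]; exact Finset.mem_singleton_self p0
    have hnd : ¬ p0.IsDiag := (Finset.mem_filter.mp hp0mem).2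
    obtain ⟨E₁, E₂, rfl⟩ : ∃ E₁ E₂ : G.edgeSet, p0 = s(E₁, E₂) :=
      ⟨p0.out.1, p0.out.2, by exact (Quot.out_eq p0).symm⟩
    rw [Sym2.lift_mk] at hroot
    change δ ^ G.lineGraph.dist E₁ E₂ = 1 at hroot
    have hEne : E₁ ≠ E₂ := by simpa using hnd
    have hadj : G.lineGraph.Adj E₁ E₂ := by
      rw [SimpleGraph.lineGraph_adj_iff_exists]
      exact ⟨hEne, b, hbmem E₁, hbmem E₂⟩
    have hdist : G.lineGraph.dist E₁ E₂ = 1 := SimpleGraph.dist_eq_one_iff_adj.mpr hadj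
    rw [hdist, pow_one] at hroot
    exact hroot
end
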